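/- No oriented graph derived from a Burling tree contains a triangle (three pairwise adjacent vertices in the underlying graph). -/
import Mathlib


/-- An oriented graph on vertex type `V`: an irreflexive, asymmetric arc relation. -/
structure OrientedGraph (V : Type) where
  arc : V → V → Prop
  irrefl : ∀ v, ¬ arc v v
  asymm : ∀ u v, arc u v → ¬ arc v u

/-- A Burling tree `(T, root, lastBorn, choose)`.  The tree is encoded by its parent
function (with `parent root = root`); `lastBorn v` is a distinguished child of each
non-leaf `v`; `choose v` is the vertex set of a (possibly empty) branch of the tree
starting at the last-born of the parent of `v` when `v` is neither the root nor a
last-born, and is empty otherwise. -/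
structure BurlingTree (V : Type) where
  root : V
  parent : V → V
  parent_root : parent root = root
  reaches_root : ∀ v, ∃ n, parent^[n] v = root
  lastBorn : V → V
  lastBorn_child : ∀ v w, w ≠ root → parent w = v →
    lastBorn v ≠ root ∧ parent (lastBorn v) = v
  choose : V → Set V
  choose_root : choose root = ∅
  choose_lastBorn : ∀ v, v ≠ root → lastBorn (parent v) = v → choose v = ∅
  choose_branch : ∀ v, v ≠ root → lastBorn (parent v) ≠ v →
    choose v = ∅ ∨ ∃ b, (∃ n, parent^[n] b = lastBorn (parent v)) ∧
      choose v = {x | (∃ n, parent^[n] x = lastBorn (parent v)) ∧ ∃ n, parent^[n] b = x}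

namespace BurlingTree

variable {V : Type} (T : BurlingTree V)

/-- `u` is an ancestor of `v` in `T` (possibly `u = v`). -/
def Anc (u v : V) : Prop := ∃ n, T.parent^[n] v = u

/-- Arc relation of the oriented graph derived from `T` with vertex set `S`
(the induced subgraph, on `S`, of the graph fully derived from `T`). -/
def Arc (S : Set V) (u v : V) : Prop := u ∈ S ∧ v ∈ S ∧ v ∈ T.choose u

/-- Underlying undirected graph of the derived graph on `S`. -/
def UGraph (S : Set V) : SimpleGraph V := SimpleGraph.fromRel (T.Arc S)

/-- Closed in-neighborhood `N⁻[v]` in the derived graph on `S`. -/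
def InNbhd (S : Set V) (v : V) : Set V := insert v {u | T.Arc S u v}

/-- The top-set of the derived graph on `S`: vertices of `S` that are the unique
vertex of `S` on the branch of `T` from the root to them. -/
def TopSet (S : Set V) : Set V := {v | v ∈ S ∧ ∀ x ∈ S, T.Anc x v → x = v}

end BurlingTree

/-- Reachability between `u` and `w` inside the set `A` of vertices of `G`. -/
def ReachIn {V : Type} (G : SimpleGraph V) (A : Set V) (u w : V) : Prop :=
  Relation.ReflTransGen (fun x y => x ∈ A ∧ y ∈ A ∧ G.Adj x y) u w

/-- `N⁻[v]` is a full in-star cutset of the graph derived from `T` on `S`. -/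
def BurlingTree.IsFullInStarCutset {V : Type} (T : BurlingTree V) (S : Set V) (v : V) : Prop :=
  ∃ a ∈ S \ T.InNbhd S v, ∃ b ∈ S \ T.InNbhd S v,
    ¬ ReachIn (T.UGraph S) (S \ T.InNbhd S v) a b

/-- The arc relation `A` is an in-forest: a disjoint union of orientations of rooted
trees with all edges oriented towards the root.  Equivalently: it is irreflexive and
asymmetric, its underlying graph is a forest, every vertex has at most one
out-neighbor, and from every vertex the unique outgoing directed path terminates in
a sink. -/
def IsInForestRel {V : Type} (A : V → V → Prop) : Prop :=
  (∀ v, ¬ A v v) ∧ (∀ u v, A u v → ¬ A v u) ∧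
  (SimpleGraph.fromRel A).IsAcyclic ∧
  (∀ u v w, A u v → A u w → v = w) ∧
  (∀ v, ∃ r, Relation.ReflTransGen A v r ∧ ∀ w, ¬ A r w)

/-- The arc relation `A` forms an in-tree on the vertex set `U`:
an in-forest all of whose vertices in `U` reach a common root. -/
def IsInTreeOn {V : Type} (A : V → V → Prop) (U : Set V) : Prop :=
  IsInForestRel A ∧ ∃ r ∈ U, ∀ v ∈ U, Relation.ReflTransGen A v r

/-- The graph with arc relation `A` and vertex set `U` is an oriented chandelier:
it is obtained from an in-tree `G'` (on `U` minus an apex `v`) with at least two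
leaves by adding the vertex `v` and exactly the arcs from each leaf of `G'` to `v`.
A leaf of the in-tree is a source having exactly one out-neighbor. -/
def ChandelierOn {V : Type} (A : V → V → Prop) (U : Set V) : Prop :=
  ∃ v ∈ U,
    IsInTreeOn (fun a b => A a b ∧ a ≠ v ∧ b ≠ v) (U \ {v}) ∧
    (∀ u, ¬ A v u) ∧
    (∀ u, A u v ↔ (u ∈ U ∧ u ≠ v ∧ (∀ w, ¬ (A w u ∧ w ≠ v ∧ u ≠ v)) ∧
       ∃ w, A u w ∧ w ≠ v ∧ u ≠ v)) ∧
    (∃ u₁ u₂, u₁ ≠ u₂ ∧ A u₁ v ∧ A u₂ v)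

namespace OrientedGraph

variable {V : Type} (G : OrientedGraph V)

/-- Underlying undirected simple graph of an oriented graph. -/
def toSimpleGraph : SimpleGraph V := SimpleGraph.fromRel G.arc

/-- `G` is an in-forest. -/
def IsInForest : Prop := IsInForestRel G.arc

/-- `G` is an oriented chandelier. -/
def IsChandelier : Prop := ChandelierOn G.arc Set.univ

/-- Closed in-neighborhood `N⁻[v]`. -/
def InNbhd (v : V) : Set V := insert v {u | G.arc u v}

/-- `G` has a full in-star cutset: for some vertex `v`, removing `N⁻[v]`
disconnects the underlying graph. -/
def HasFullInStarCutset : Prop :=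
  ∃ v, ∃ a ∈ (G.InNbhd v)ᶜ, ∃ b ∈ (G.InNbhd v)ᶜ,
    ¬ ReachIn G.toSimpleGraph (G.InNbhd v)ᶜ a b

/-- `v` is a cut vertex of `G`: some two vertices distinct from `v` are connected
in the underlying graph but disconnected after removing `v`. -/
def IsCutVertex (v : V) : Prop :=
  ∃ a b, a ≠ v ∧ b ≠ v ∧ G.toSimpleGraph.Reachable a b ∧
    ¬ ReachIn G.toSimpleGraph {v}ᶜ a b

/-- `G` is a `k`-Burling oriented graph: it is isomorphic to a graph derived from a
Burling tree `T` such that every branch of `T` contains at most `k` vertices of `G`. -/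
def IsKBurling (k : ℕ) : Prop :=
  ∃ (W : Type) (T : BurlingTree W) (f : V → W),
    Function.Injective f ∧
    (∀ u v, G.arc u v ↔ T.Arc (Set.range f) (f u) (f v)) ∧
    ∀ b : W, ({x | x ∈ Set.range f ∧ T.Anc x b}).ncard ≤ k

end OrientedGraph

/-- The graph with arc relation `A` on vertex set `U` is (isomorphic to) a graph
derived from some Burling tree. -/
def IsDerivedOn {V : Type} (A : V → V → Prop) (U : Set V) : Prop :=
  ∃ (W : Type) (T : BurlingTree W) (f : V → W),
    Set.InjOn f U ∧ ∀ a ∈ U, ∀ b ∈ U, (A a b ↔ f b ∈ T.choose (f a))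

/-- `C` is a hole of the graph derived from `T` on `S`: an induced cycle of length
at least 4 of the underlying graph (a finite set of at least four vertices whose
induced subgraph is connected and 2-regular). -/
def BurlingTree.IsHole {V : Type} (T : BurlingTree V) (S : Set V) (C : Set V) : Prop :=
  C ⊆ S ∧ C.Finite ∧ 4 ≤ C.ncard ∧
  (∀ x ∈ C, ({y | y ∈ C ∧ (T.UGraph S).Adj x y}).ncard = 2) ∧
  (∀ x ∈ C, ∀ y ∈ C, ReachIn (T.UGraph S) C x y)

/-- `p` is the pivot of the hole `C`: a sink of the hole both of whose neighbors in
the hole are sources of the hole (the antennas). -/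
def BurlingTree.IsPivotOf {V : Type} (T : BurlingTree V) (S : Set V) (C : Set V) (p : V) : Prop :=
  p ∈ C ∧ (∀ w ∈ C, ¬ T.Arc S p w) ∧
  (∀ q ∈ C, (T.UGraph S).Adj p q → ∀ w ∈ C, ¬ T.Arc S w q)

namespace BurlingTree

variable {V : Type} (T : BurlingTree V)

attribute [local instance] Classical.propDecidable

/-- Depth of a vertex: least number of parent steps to reach the root. -/
noncomputable def depth (v : V) : ℕ := Nat.find (T.reaches_root v)

lemma iterate_root (n : ℕ) : T.parent^[n] T.root = T.root :=
  Function.iterate_fixed T.parent_root n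

lemma depth_spec (v : V) : T.parent^[T.depth v] v = T.root := Nat.find_spec (T.reaches_root v)

lemma depth_le {v : V} {n : ℕ} (h : T.parent^[n] v = T.root) : T.depth v ≤ n :=
  Nat.find_le h

lemma depth_root : T.depth T.root = 0 :=
  Nat.le_zero.mp (T.depth_le (by simp))

lemma eq_root_of_depth_eq_zero {v : V} (h : T.depth v = 0) : v = T.root := by
  have := T.depth_spec v
  rwa [h, Function.iterate_zero_apply] at this

lemma depth_pos {v : V} (h : v ≠ T.root) : 1 ≤ T.depth v := by
  rcases Nat.eq_zero_or_pos (T.depth v) with h0 | h0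
  · exact absurd (T.eq_root_of_depth_eq_zero h0) h
  · exact h0

lemma depth_parent_add_one {v : V} (h : v ≠ T.root) :
    T.depth v = T.depth (T.parent v) + 1 := by
  have h1 : 1 ≤ T.depth v := T.depth_pos h
  have h2 : T.depth (T.parent v) ≤ T.depth v - 1 := by
    apply T.depth_le
    have : T.parent^[T.depth v - 1] (T.parent v) = T.parent^[T.depth v] v := by
      rw [← Function.iterate_succ_apply]
      congr 1
      omega
    rw [this]; exact T.depth_spec v
  have h3 : T.depth v ≤ T.depth (T.parent v) + 1 := by
    apply T.depth_le
    rw [Function.iterate_succ_apply]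
    exact T.depth_spec (T.parent v)
  omega

lemma depth_strict {x x' : V} (hx : x ≠ T.root) {j : ℕ} (hj : 1 ≤ j)
    (h : T.parent^[j] x = x') : T.depth x' < T.depth x := by
  have hd : 1 ≤ T.depth x := T.depth_pos hx
  by_cases hc : j ≤ T.depth x
  · have hroot : T.parent^[T.depth x - j] x' = T.root := by
      rw [← h, ← Function.iterate_add_apply]
      have : T.depth x - j + j = T.depth x := by omega
      rw [this]; exact T.depth_spec x
    have := T.depth_le hroot
    omega
  · have : x' = T.root := by
      rw [← h]
      have hj' : j = (j - T.depth x) + T.depth x := by omega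
      rw [hj', Function.iterate_add_apply, T.depth_spec x, T.iterate_root]
    rw [this, T.depth_root]
    omega

lemma anc_eq_of_depth_eq {y x x' : V} {k m : ℕ} (h1 : T.parent^[k] y = x)
    (h2 : T.parent^[m] y = x') (hd : T.depth x = T.depth x') (hx : x ≠ T.root) :
    x = x' := by
  have hx' : x' ≠ T.root := by
    intro h
    rw [h, T.depth_root] at hd
    exact hx (T.eq_root_of_depth_eq_zero hd)
  rcases le_total k m with h | h
  · have hmk : T.parent^[m - k] x = x' := by
      rw [← h1, ← Function.iterate_add_apply, ← h2]
      congr 1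
      omega
    by_cases he : m = k
    · subst he
      simpa using hmk
    · have := T.depth_strict hx (j := m - k) (by omega) hmk
      omega
  · have hmk : T.parent^[k - m] x' = x := by
      rw [← h2, ← Function.iterate_add_apply, ← h1]
      congr 1
      omega
    by_cases he : k = m
    · subst he
      simp at hmk
      exact hmk.symm
    · have := T.depth_strict hx' (j := k - m) (by omega) hmk
      omega

lemma choose_spec {x y : V} (h : y ∈ T.choose x) :
    x ≠ T.root ∧ T.lastBorn (T.parent x) ≠ x ∧
      ∃ m, T.parent^[m] y = T.lastBorn (T.parent x) := by
  have hx : x ≠ T.root := by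
    rintro rfl
    rw [T.choose_root] at h
    exact h
  have hl : T.lastBorn (T.parent x) ≠ x := by
    intro he
    rw [T.choose_lastBorn x hx he] at h
    exact h
  refine ⟨hx, hl, ?_⟩
  rcases T.choose_branch x hx hl with h0 | ⟨b, hb, hset⟩
  · rw [h0] at h; exact h.elim
  · rw [hset] at h; exact h.1

lemma sibling {x : V} (hx : x ≠ T.root) :
    T.lastBorn (T.parent x) ≠ T.root ∧ T.parent (T.lastBorn (T.parent x)) = T.parent x :=
  T.lastBorn_child (T.parent x) x hx rfl

lemma depth_lastBorn {x : V} (hx : x ≠ T.root) :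
    T.depth (T.lastBorn (T.parent x)) = T.depth x := by
  obtain ⟨h1, h2⟩ := T.sibling hx
  rw [T.depth_parent_add_one h1, T.depth_parent_add_one hx, h2]

lemma not_anc_of_mem_choose {x y : V} (h : y ∈ T.choose x) :
    (∀ k, T.parent^[k] y ≠ x) ∧ (∀ k, T.parent^[k] x ≠ y) := by
  obtain ⟨hx, hl, m, hm⟩ := T.choose_spec h
  obtain ⟨hLr, hLp⟩ := T.sibling hx
  have hdL : T.depth (T.lastBorn (T.parent x)) = T.depth x := T.depth_lastBorn hx
  constructor
  · intro k hk
    exact hl (T.anc_eq_of_depth_eq hm hk hdL hLr)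
  · intro k hk
    have hL : T.parent^[m + k] x = T.lastBorn (T.parent x) := by
      rw [Function.iterate_add_apply, hk, hm]
    have hmk : 1 ≤ m + k := by
      by_contra hc
      push_neg at hc
      have hm0 : m = 0 := by omega
      have hk0 : k = 0 := by omega
      subst hm0; subst hk0
      simp at hL
      exact hl hL.symm
    have := T.depth_strict hx hmk hL
    omega

lemma comparable_of_mem_choose {u v w : V} (hv : v ∈ T.choose u) (hw : w ∈ T.choose u) :
    (∃ k, T.parent^[k] v = w) ∨ ∃ k, T.parent^[k] w = v := by
  obtain ⟨hu, hl, -⟩ := T.choose_spec hv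
  rcases T.choose_branch u hu hl with h0 | ⟨b, hb, hset⟩
  · rw [h0] at hv; exact hv.elim
  · rw [hset] at hv hw
    obtain ⟨-, n, hn⟩ := hv
    obtain ⟨-, n', hn'⟩ := hw
    rcases le_total n n' with h | h
    · left
      refine ⟨n' - n, ?_⟩
      rw [← hn, ← Function.iterate_add_apply, ← hn']
      congr 1
      omega
    · right
      refine ⟨n - n', ?_⟩
      rw [← hn', ← Function.iterate_add_apply, ← hn]
      congr 1
      omega

lemma no_two_out_arc {u v w : V} (hv : v ∈ T.choose u) (hw : w ∈ T.choose u)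
    (hvw : w ∈ T.choose v) : False := by
  obtain ⟨h1, h2⟩ := T.not_anc_of_mem_choose hvw
  rcases T.comparable_of_mem_choose hv hw with ⟨k, hk⟩ | ⟨k, hk⟩
  · exact h2 k hk
  · exact h1 k hk

lemma depth_lt_of_choose {x y z : V} (hy : y ∈ T.choose x) (hz : z ∈ T.choose y) :
    T.depth x < T.depth y := by
  obtain ⟨hx, hlx, m, hm⟩ := T.choose_spec hy
  obtain ⟨hyr, hly, -⟩ := T.choose_spec hz
  obtain ⟨hLr, hLp⟩ := T.sibling hx
  have hdL : T.depth (T.lastBorn (T.parent x)) = T.depth x := T.depth_lastBorn hx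
  have hm1 : 1 ≤ m := by
    by_contra hc
    push_neg at hc
    have hm0 : m = 0 := by omega
    subst hm0
    simp at hm
    apply hly
    rw [hm, hLp]
  have := T.depth_strict hyr hm1 hm
  omega

lemma no_directed_triangle {a b c : V} (h1 : b ∈ T.choose a) (h2 : c ∈ T.choose b)
    (h3 : a ∈ T.choose c) : False := by
  have d1 := T.depth_lt_of_choose h1 h2
  have d2 := T.depth_lt_of_choose h2 h3
  have d3 := T.depth_lt_of_choose h3 h1
  omega

end BurlingTree

/-- No oriented graph derived from a Burling tree contains a triangle
(three pairwise adjacent vertices in the underlying graph). -/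
theorem stmt3 (V : Type) (T : BurlingTree V) (S : Set V) (a b c : V) :
    ¬ ((T.UGraph S).Adj a b ∧ (T.UGraph S).Adj b c ∧ (T.UGraph S).Adj a c) := by
  rintro ⟨hab, hbc, hac⟩
  rw [BurlingTree.UGraph, SimpleGraph.fromRel_adj] at hab hbc hac
  obtain ⟨-, hab⟩ := hab
  obtain ⟨-, hbc⟩ := hbc
  obtain ⟨-, hac⟩ := hac
  have eab : b ∈ T.choose a ∨ a ∈ T.choose b := by
    rcases hab with h | h
    exacts [Or.inl h.2.2, Or.inr h.2.2]
  have ebc : c ∈ T.choose b ∨ b ∈ T.choose c := by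
    rcases hbc with h | h
    exacts [Or.inl h.2.2, Or.inr h.2.2]
  have eac : c ∈ T.choose a ∨ a ∈ T.choose c := by
    rcases hac with h | h
    exacts [Or.inl h.2.2, Or.inr h.2.2]
  rcases eab with h1 | h1 <;> rcases ebc with h2 | h2 <;> rcases eac with h3 | h3
  · exact T.no_two_out_arc h1 h3 h2
  · exact T.no_directed_triangle h1 h2 h3
  · exact T.no_two_out_arc h3 h1 h2
  · exact T.no_two_out_arc h3 h2 h1
  · exact T.no_two_out_arc h1 h2 h3
  · exact T.no_two_out_arc h2 h1 h3
  · exact T.no_directed_triangle h3 h2 h1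
  · exact T.no_two_out_arc h2 h3 h1
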